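/- Suppose each f_i is convex with L_i-Lipschitz gradient, L = max_i L_i, 0 < c < 1/(2L·λ_max(𝕃)) where λ_max(𝕃) is the largest eigenvalue of 𝕃, and there exists (x*, q*) with x* − r + c Uᵀ q* = 0 and U ∇f(x*) = 0. Then along any Mirror-EXTRA trajectory (x^k, q^k), the first-order optimality residuals decay at an o(1/k) rate: lim_{k→∞} k·‖U ∇f(x^{k+1})‖_F² = 0 and lim_{k→∞} k·‖x^{k+1} − r + c Uᵀ q^{k+1}‖_F² = 0. -/

import Mathlib

open Matrix Filter Topology

noncomputable section

/-- Squared Frobenius norm. -/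
def frobSq {m p : ℕ} (A : Matrix (Fin m) (Fin p) ℝ) : ℝ := ∑ i, ∑ j, (A i j) ^ 2

/-- Squared Euclidean norm of a vector. -/
def enormSq {p : ℕ} (u : Fin p → ℝ) : ℝ := ∑ j, (u j) ^ 2

/-- The matrix whose `i`-th row is `∇fᵢ(xᵢ)`, given the gradient maps `g i`. -/
def gradMat {n p : ℕ} (g : Fin n → (Fin p → ℝ) → (Fin p → ℝ))
    (x : Matrix (Fin n) (Fin p) ℝ) : Matrix (Fin n) (Fin p) ℝ :=
  Matrix.of fun i => g i (x i)

/-!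
Give matrices the Frobenius inner product. Then `A ↦ U * A` and `B ↦ Uᵀ * B` are adjoint,
`‖U * A‖² ≤ λ_max ‖A‖²`, and by the Baillon–Haddad theorem the row-wise gradient map `∇f` is
`1/L`-cocoercive. For any two Mirror-EXTRA trajectories, cocoercivity at the new iterates turns
the updates into the decrease of the energy `c/2 ‖Δq‖² + c λ_max ‖Δ∇f‖²` by at least
`(1/L - 2 c λ_max) ‖Δ∇f‖²`, a positive multiple by the step-size condition. Against the
stationary trajectory at `(x*, q*)` this makes `∑ₖ ‖∇f(xᵏ) - ∇f(x*)‖²` finite; against its own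
shift it gives a nonincreasing energy `Wₖ`, which that bound makes summable, so `k Wₖ → 0`.
Both residuals are at most constant multiples of `Wₖ`, since `U ∇f(xᵏ⁺¹) = qᵏ⁺¹ - qᵏ` and the
primal residual is `c 𝕃 (∇f(xᵏ⁺¹) - ∇f(xᵏ))`.
-/

theorem summable_of_succ_add_le {V D : ℕ → ℝ} (hV : ∀ k, 0 ≤ V k) (hD : ∀ k, 0 ≤ D k)
    (h : ∀ k, V (k + 1) + D k ≤ V k) : Summable D := by
  have hsum : ∀ K, ∑ k ∈ Finset.range K, D k + V K ≤ V 0 := by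
    intro K
    induction K with
    | zero => simp
    | succ K ih =>
      rw [Finset.sum_range_succ]
      linarith [h K]
  exact summable_of_sum_range_le hD fun K => by linarith [hsum K, hV K]

theorem Antitone.tendsto_nat_mul_of_summable {a : ℕ → ℝ} (ha : Antitone a) (hs : Summable a) :
    Tendsto (fun k : ℕ => (k : ℝ) * a k) atTop (𝓝 0) := by
  have hnonneg : ∀ k, 0 ≤ a k := fun k =>
    _root_.le_of_tendsto hs.tendsto_atTop_zero (eventually_atTop.2 ⟨k, fun _ hm => ha hm⟩)
  have htail : Tendsto (fun k => 2 * ∑' j, a (j + k / 2)) atTop (𝓝 0) := by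
    simpa using
      ((tendsto_sum_nat_add a).comp (Nat.tendsto_div_const_atTop two_ne_zero)).const_mul 2
  refine squeeze_zero (fun k => mul_nonneg k.cast_nonneg (hnonneg k)) (fun k => ?_) htail
  -- `k aₖ ≤ 2 (k - k/2) aₖ ≤ 2 ∑_{j ≥ k/2} aⱼ`, a tail of a convergent series
  have hblock : ((k - k / 2 : ℕ) : ℝ) * a k ≤ ∑ j ∈ Finset.range (k - k / 2), a (j + k / 2) := by
    simpa using Finset.card_nsmul_le_sum (Finset.range (k - k / 2)) (fun j => a (j + k / 2)) (a k)
      fun j hj => ha (by rw [Finset.mem_range] at hj; omega)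
  have htsum := ((summable_nat_add_iff (k / 2)).2 hs).sum_le_tsum (Finset.range (k - k / 2))
    fun j _ => hnonneg (j + k / 2)
  have hk : (k : ℝ) ≤ 2 * ((k - k / 2 : ℕ) : ℝ) := by
    norm_cast
    omega
  nlinarith [hnonneg k]

theorem norm_sub_sq_le_two_mul_add {E : Type*} [SeminormedAddGroup E] (u v : E) :
    ‖u - v‖ ^ 2 ≤ 2 * ‖u‖ ^ 2 + 2 * ‖v‖ ^ 2 := by
  nlinarith [norm_sub_le u v, norm_nonneg (u - v), sq_nonneg (‖u‖ - ‖v‖)]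

section Smooth

open Set RealInnerProductSpace

variable {E : Type*} [NormedAddCommGroup E] [InnerProductSpace ℝ E] [CompleteSpace E]

theorem HasGradientAt.hasDerivAt_add_smul {f : E → ℝ} {g x v : E} {t : ℝ}
    (hf : HasGradientAt f g (x + t • v)) :
    HasDerivAt (fun s : ℝ => f (x + s • v)) ⟪g, v⟫ t := by
  have hline : HasDerivAt (fun s : ℝ => x + s • v) v t := by
    simpa using ((hasDerivAt_id t).smul_const v).const_add x
  have := hf.hasFDerivAt.comp_hasDerivAt t hline
  simp only [InnerProductSpace.toDual_apply_apply] at this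
  exact this

theorem ConvexOn.add_inner_sub_le_of_hasGradientAt {f : E → ℝ} {g x : E}
    (hf : ConvexOn ℝ univ f) (hg : HasGradientAt f g x) (y : E) :
    f x + ⟪g, y - x⟫ ≤ f y := by
  have hline : ConvexOn ℝ univ fun t : ℝ => f (x + t • (y - x)) := by
    have h := hf.comp_affineMap (AffineMap.lineMap (k := ℝ) x y)
    rw [preimage_univ] at h
    refine h.congr fun t _ => ?_
    simp [AffineMap.lineMap_apply_module', add_comm]
  have hderiv : HasDerivAt (fun t : ℝ => f (x + t • (y - x))) ⟪g, y - x⟫ 0 :=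
    HasGradientAt.hasDerivAt_add_smul (by simpa using hg)
  have := hline.le_slope_of_hasDerivAt (mem_univ 0) (mem_univ 1) one_pos hderiv
  simp only [slope_def_field, one_smul, add_sub_cancel, zero_smul, add_zero, sub_zero, div_one]
    at this
  linarith

theorem le_add_inner_sub_add_norm_sq_of_lipschitz {f : E → ℝ} {G : E → E} {L : ℝ}
    (hf : ∀ z, HasGradientAt f (G z) z) (hG : ∀ u v, ‖G u - G v‖ ≤ L * ‖u - v‖) (x y : E) :
    f y ≤ f x + ⟪G x, y - x⟫ + L / 2 * ‖y - x‖ ^ 2 := by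
  set v := y - x
  set χ : ℝ → ℝ := fun t => f (x + t • v) - t * ⟪G x, v⟫ - t ^ 2 * (L / 2 * ‖v‖ ^ 2)
  have hχ : ∀ t, HasDerivAt χ (⟪G (x + t • v) - G x, v⟫ - t * (L * ‖v‖ ^ 2)) t := by
    intro t
    refine ((((hf (x + t • v)).hasDerivAt_add_smul).sub
      ((hasDerivAt_id t).mul_const ⟪G x, v⟫)).sub
      ((hasDerivAt_pow 2 t).mul_const (L / 2 * ‖v‖ ^ 2))).congr_deriv ?_
    simp only [inner_sub_left]
    ring
  have hnonpos : ∀ t ∈ interior (Icc (0 : ℝ) 1),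
      ⟪G (x + t • v) - G x, v⟫ - t * (L * ‖v‖ ^ 2) ≤ 0 := by
    intro t ht
    rw [interior_Icc] at ht
    rw [sub_nonpos]
    calc ⟪G (x + t • v) - G x, v⟫ ≤ ‖G (x + t • v) - G x‖ * ‖v‖ := real_inner_le_norm _ _
      _ ≤ L * ‖t • v‖ * ‖v‖ := by
        gcongr
        simpa using hG (x + t • v) x
      _ = t * (L * ‖v‖ ^ 2) := by
        rw [norm_smul, Real.norm_of_nonneg ht.1.le]
        ring
  have hanti : AntitoneOn χ (Icc 0 1) :=
    antitoneOn_of_hasDerivWithinAt_nonpos (convex_Icc 0 1)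
      (fun t _ => (hχ t).continuousAt.continuousWithinAt)
      (fun t _ => (hχ t).hasDerivWithinAt) hnonpos
  have := hanti (by norm_num) (by norm_num) zero_le_one
  simp only [one_smul, add_sub_cancel, one_mul, one_pow, zero_smul, add_zero, zero_mul, sub_zero,
    ne_eq, OfNat.ofNat_ne_zero, not_false_eq_true, zero_pow, χ, v] at this
  linarith

theorem ConvexOn.add_inner_sub_add_norm_sq_le_of_lipschitz {f : E → ℝ} {G : E → E} {L : ℝ}
    (hL : 0 < L) (hconv : ConvexOn ℝ univ f) (hf : ∀ z, HasGradientAt f (G z) z)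
    (hG : ∀ u v, ‖G u - G v‖ ≤ L * ‖u - v‖) (x y : E) :
    f x + ⟪G x, y - x⟫ + (2 * L)⁻¹ * ‖G y - G x‖ ^ 2 ≤ f y := by
  set d := G y - G x
  -- descent lemma at the gradient step `y - L⁻¹ • d`, convexity bound at `x`
  have hdescent := le_add_inner_sub_add_norm_sq_of_lipschitz hf hG y (y - L⁻¹ • d)
  have hconvex := hconv.add_inner_sub_le_of_hasGradientAt (hf x) (y - L⁻¹ • d)
  rw [sub_sub_cancel_left, inner_neg_right, real_inner_smul_right, norm_neg, norm_smul,
    Real.norm_of_nonneg (inv_nonneg.2 hL.le)] at hdescent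
  rw [sub_right_comm, inner_sub_right, real_inner_smul_right] at hconvex
  have hd : ⟪G y, d⟫ - ⟪G x, d⟫ = ‖d‖ ^ 2 := by
    rw [← inner_sub_left, real_inner_self_eq_norm_sq]
  have hL' : L / 2 * (L⁻¹ * ‖d‖) ^ 2 = (2 * L)⁻¹ * ‖d‖ ^ 2 := by
    field_simp
  linear_combination hdescent + hconvex - L⁻¹ * hd + hL'

theorem ConvexOn.cocoercive_of_lipschitz_gradient {f : E → ℝ} {G : E → E} {L : ℝ} (hL : 0 < L)
    (hconv : ConvexOn ℝ univ f) (hf : ∀ z, HasGradientAt f (G z) z)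
    (hG : ∀ u v, ‖G u - G v‖ ≤ L * ‖u - v‖) (x y : E) :
    L⁻¹ * ‖G x - G y‖ ^ 2 ≤ ⟪G x - G y, x - y⟫ := by
  have hxy := hconv.add_inner_sub_add_norm_sq_le_of_lipschitz hL hf hG x y
  have hyx := hconv.add_inner_sub_add_norm_sq_le_of_lipschitz hL hf hG y x
  rw [norm_sub_rev] at hxy
  have h : ⟪G x, y - x⟫ + ⟪G y, x - y⟫ = -⟪G x - G y, x - y⟫ := by
    rw [← neg_sub x y, inner_neg_right, inner_sub_left]
    ring
  have hL' : (2 * L)⁻¹ + (2 * L)⁻¹ = L⁻¹ := by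
    field_simp
    norm_num
  linear_combination hxy + hyx - h + ‖G x - G y‖ ^ 2 * hL'

end Smooth

section Trajectory

variable {E F : Type*} [AddCommGroup E] [Module ℝ E] [AddCommGroup F] [Module ℝ F]

structure IsMirrorExtraTrajectory (U : E →ₗ[ℝ] F) (Ut : F →ₗ[ℝ] E) (G : E → E) (r : E) (c : ℝ)
    (x : ℕ → E) (q : ℕ → F) : Prop where
  primal (k : ℕ) : x (k + 1) - r + c • Ut (q (k + 1)) - c • Ut (U (G (x (k + 1)) - G (x k))) = 0
  dual (k : ℕ) : q (k + 1) = q k + U (G (x (k + 1)))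

namespace IsMirrorExtraTrajectory

variable {U : E →ₗ[ℝ] F} {Ut : F →ₗ[ℝ] E} {G : E → E} {r : E} {c : ℝ} {x : ℕ → E} {q : ℕ → F}

theorem const {xs : E} {qs : F} (hxs : xs - r + c • Ut qs = 0) (hqs : U (G xs) = 0) :
    IsMirrorExtraTrajectory U Ut G r c (fun _ => xs) (fun _ => qs) where
  primal _ := by simpa using hxs
  dual _ := by simp [hqs]

theorem shift (h : IsMirrorExtraTrajectory U Ut G r c x q) :
    IsMirrorExtraTrajectory U Ut G r c (fun k => x (k + 1)) (fun k => q (k + 1)) where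
  primal k := h.primal (k + 1)
  dual k := h.dual (k + 1)

theorem sub_succ_eq {x' : ℕ → E} {q' : ℕ → F} (h : IsMirrorExtraTrajectory U Ut G r c x q)
    (h' : IsMirrorExtraTrajectory U Ut G r c x' q') (k : ℕ) :
    x (k + 1) - x' (k + 1) = c • Ut (U ((G (x (k + 1)) - G (x' (k + 1))) - (G (x k) - G (x' k)))
      - (q (k + 1) - q' (k + 1))) := by
  calc x (k + 1) - x' (k + 1)
      = (x (k + 1) - r + c • Ut (q (k + 1)) - c • Ut (U (G (x (k + 1)) - G (x k))))
        - (x' (k + 1) - r + c • Ut (q' (k + 1)) - c • Ut (U (G (x' (k + 1)) - G (x' k))))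
        + c • Ut (U ((G (x (k + 1)) - G (x' (k + 1))) - (G (x k) - G (x' k)))
          - (q (k + 1) - q' (k + 1))) := by
        simp only [map_sub, smul_sub]
        abel
    _ = _ := by rw [h.primal k, h'.primal k, sub_self, zero_add]

end IsMirrorExtraTrajectory

end Trajectory

section Energy

variable {E F : Type*} [NormedAddCommGroup E] [NormedAddCommGroup F]

def mirrorExtraEnergy (G : E → E) (c Λ : ℝ) (x x' : ℕ → E) (q q' : ℕ → F) (k : ℕ) : ℝ :=
  c / 2 * ‖q k - q' k‖ ^ 2 + c * Λ * ‖G (x k) - G (x' k)‖ ^ 2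

theorem mirrorExtraEnergy_nonneg {G : E → E} {c Λ : ℝ} (hc : 0 ≤ c) (hΛ : 0 ≤ Λ)
    (x x' : ℕ → E) (q q' : ℕ → F) (k : ℕ) : 0 ≤ mirrorExtraEnergy G c Λ x x' q q' k := by
  unfold mirrorExtraEnergy
  positivity

variable [InnerProductSpace ℝ E] [InnerProductSpace ℝ F]

open RealInnerProductSpace

theorem norm_sq_le_of_adjoint {U : E →ₗ[ℝ] F} {Ut : F →ₗ[ℝ] E} {Λ : ℝ} (hΛ : 0 ≤ Λ)
    (hadj : ∀ e f, ⟪U e, f⟫ = ⟪e, Ut f⟫) (hU : ∀ e, ‖U e‖ ^ 2 ≤ Λ * ‖e‖ ^ 2) (f : F) :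
    ‖Ut f‖ ^ 2 ≤ Λ * ‖f‖ ^ 2 := by
  rcases (sq_nonneg ‖Ut f‖).eq_or_lt with h0 | hpos
  · rw [← h0]
    positivity
  have hcs : ‖Ut f‖ ^ 2 ≤ ‖U (Ut f)‖ * ‖f‖ := by
    rw [← real_inner_self_eq_norm_sq, ← hadj]
    exact real_inner_le_norm _ _
  refine le_of_mul_le_mul_left ?_ hpos
  calc ‖Ut f‖ ^ 2 * ‖Ut f‖ ^ 2 ≤ (‖U (Ut f)‖ * ‖f‖) ^ 2 := by rw [← sq]; gcongr
    _ = ‖U (Ut f)‖ ^ 2 * ‖f‖ ^ 2 := mul_pow _ _ _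
    _ ≤ Λ * ‖Ut f‖ ^ 2 * ‖f‖ ^ 2 := by gcongr; exact hU _
    _ = ‖Ut f‖ ^ 2 * (Λ * ‖f‖ ^ 2) := by ring

namespace IsMirrorExtraTrajectory

variable {U : E →ₗ[ℝ] F} {Ut : F →ₗ[ℝ] E} {G : E → E} {r : E} {c : ℝ} {x : ℕ → E} {q : ℕ → F}

theorem energy_succ_add_le {x' : ℕ → E} {q' : ℕ → F} {Λ L : ℝ}
    (h : IsMirrorExtraTrajectory U Ut G r c x q) (h' : IsMirrorExtraTrajectory U Ut G r c x' q')
    (hc : 0 ≤ c) (hΛ : 0 ≤ Λ) (hadj : ∀ e f, ⟪U e, f⟫ = ⟪e, Ut f⟫)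
    (hU : ∀ e, ‖U e‖ ^ 2 ≤ Λ * ‖e‖ ^ 2)
    (hG : ∀ u v, L⁻¹ * ‖G u - G v‖ ^ 2 ≤ ⟪G u - G v, u - v⟫) (k : ℕ) :
    mirrorExtraEnergy G c Λ x x' q q' (k + 1)
        + (L⁻¹ - 2 * c * Λ) * ‖G (x (k + 1)) - G (x' (k + 1))‖ ^ 2
      ≤ mirrorExtraEnergy G c Λ x x' q q' k := by
  have hq : q (k + 1) - q' (k + 1) = (q k - q' k) + U (G (x (k + 1)) - G (x' (k + 1))) := by
    rw [h.dual, h'.dual, map_sub]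
    abel
  have hcoco := hG (x (k + 1)) (x' (k + 1))
  rw [h.sub_succ_eq h' k, hq, real_inner_smul_right, ← hadj] at hcoco
  unfold mirrorExtraEnergy
  rw [hq, norm_add_sq_real]
  generalize G (x (k + 1)) - G (x' (k + 1)) = dG at hcoco ⊢
  generalize G (x k) - G (x' k) = dG₀ at hcoco ⊢
  rw [map_sub, inner_sub_right, inner_sub_right, inner_add_right,
    real_inner_self_eq_norm_sq] at hcoco
  have hU₀ : ‖U dG - U dG₀‖ ^ 2 ≤ Λ * (2 * ‖dG‖ ^ 2 + 2 * ‖dG₀‖ ^ 2) := by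
    rw [← map_sub]
    refine (hU _).trans (mul_le_mul_of_nonneg_left ?_ hΛ)
    exact norm_sub_sq_le_two_mul_add dG dG₀
  linear_combination hcoco - c / 2 * norm_sub_sq_real (U dG) (U dG₀) + c / 2 * hU₀
    + c / 2 * sq_nonneg ‖U dG₀‖ + c * real_inner_comm (U dG) (q k - q' k)

theorem summable_norm_sub_sq {xs : E} {qs : F} {Λ L : ℝ}
    (h : IsMirrorExtraTrajectory U Ut G r c x q) (hxs : xs - r + c • Ut qs = 0)
    (hqs : U (G xs) = 0) (hc : 0 ≤ c) (hΛ : 0 ≤ Λ) (hadj : ∀ e f, ⟪U e, f⟫ = ⟪e, Ut f⟫)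
    (hU : ∀ e, ‖U e‖ ^ 2 ≤ Λ * ‖e‖ ^ 2)
    (hG : ∀ u v, L⁻¹ * ‖G u - G v‖ ^ 2 ≤ ⟪G u - G v, u - v⟫) (hcΛ : 2 * c * Λ < L⁻¹) :
    Summable fun k => ‖G (x k) - G xs‖ ^ 2 := by
  have hstep := h.energy_succ_add_le (const hxs hqs) hc hΛ hadj hU hG
  have hsum := summable_of_succ_add_le (mirrorExtraEnergy_nonneg hc hΛ _ _ _ _)
    (fun k => mul_nonneg (sub_pos.2 hcΛ).le (sq_nonneg _)) hstep
  rw [summable_mul_left_iff (sub_pos.2 hcΛ).ne'] at hsum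
  exact (summable_nat_add_iff 1).1 hsum

theorem tendsto_nat_mul_energy_shift {xs : E} {qs : F} {Λ L : ℝ}
    (h : IsMirrorExtraTrajectory U Ut G r c x q) (hxs : xs - r + c • Ut qs = 0)
    (hqs : U (G xs) = 0) (hc : 0 ≤ c) (hΛ : 0 ≤ Λ) (hadj : ∀ e f, ⟪U e, f⟫ = ⟪e, Ut f⟫)
    (hU : ∀ e, ‖U e‖ ^ 2 ≤ Λ * ‖e‖ ^ 2)
    (hG : ∀ u v, L⁻¹ * ‖G u - G v‖ ^ 2 ≤ ⟪G u - G v, u - v⟫) (hcΛ : 2 * c * Λ < L⁻¹) :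
    Tendsto (fun k : ℕ => (k : ℝ) *
      mirrorExtraEnergy G c Λ x (fun k => x (k + 1)) q (fun k => q (k + 1)) k) atTop (𝓝 0) := by
  set a := fun k => ‖G (x k) - G xs‖ ^ 2
  have ha : Summable a := h.summable_norm_sub_sq hxs hqs hc hΛ hadj hU hG hcΛ
  refine Antitone.tendsto_nat_mul_of_summable (antitone_nat_of_succ_le fun k => ?_) ?_
  · have := h.energy_succ_add_le h.shift hc hΛ hadj hU hG k
    nlinarith [sq_nonneg ‖G (x (k + 1)) - G (x (k + 1 + 1))‖]
  · refine Summable.of_nonneg_of_le (mirrorExtraEnergy_nonneg hc hΛ _ _ _ _) (fun k => ?_)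
      ((((summable_nat_add_iff 1).2 ha).mul_left (c / 2 * Λ + 2 * c * Λ)).add
        (ha.mul_left (2 * c * Λ)))
    have hq : q k - q (k + 1) = -U (G (x (k + 1)) - G xs) := by
      rw [h.dual, map_sub, hqs]
      abel
    have hdual : ‖q k - q (k + 1)‖ ^ 2 ≤ Λ * a (k + 1) := by
      rw [hq, norm_neg]
      exact hU _
    have hgrad : ‖G (x k) - G (x (k + 1))‖ ^ 2 ≤ 2 * a k + 2 * a (k + 1) := by
      simpa using norm_sub_sq_le_two_mul_add (G (x k) - G xs) (G (x (k + 1)) - G xs)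
    unfold mirrorExtraEnergy
    linear_combination c / 2 * hdual + c * Λ * hgrad

theorem tendsto_nat_mul_residual {Λ L : ℝ} (h : IsMirrorExtraTrajectory U Ut G r c x q)
    (hopt : ∃ xs qs, xs - r + c • Ut qs = 0 ∧ U (G xs) = 0) (hc : 0 < c) (hΛ : 0 ≤ Λ)
    (hadj : ∀ e f, ⟪U e, f⟫ = ⟪e, Ut f⟫) (hU : ∀ e, ‖U e‖ ^ 2 ≤ Λ * ‖e‖ ^ 2)
    (hG : ∀ u v, L⁻¹ * ‖G u - G v‖ ^ 2 ≤ ⟪G u - G v, u - v⟫) (hcΛ : 2 * c * Λ < L⁻¹) :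
    Tendsto (fun k : ℕ => (k : ℝ) * ‖U (G (x (k + 1)))‖ ^ 2) atTop (𝓝 0) ∧
      Tendsto (fun k : ℕ => (k : ℝ) * ‖x (k + 1) - r + c • Ut (q (k + 1))‖ ^ 2) atTop (𝓝 0) := by
  obtain ⟨xs, qs, hxs, hqs⟩ := hopt
  set W := mirrorExtraEnergy G c Λ x (fun k => x (k + 1)) q (fun k => q (k + 1))
  have hW := h.tendsto_nat_mul_energy_shift hxs hqs hc.le hΛ hadj hU hG hcΛ
  have squeeze {b : ℕ → ℝ} (C : ℝ) (hb : ∀ k, 0 ≤ b k) (hbW : ∀ k, b k ≤ C * W k) :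
      Tendsto (fun k : ℕ => (k : ℝ) * b k) atTop (𝓝 0) := by
    refine squeeze_zero (fun k => mul_nonneg k.cast_nonneg (hb k)) (fun k => ?_)
      (by simpa using hW.const_mul C)
    rw [mul_left_comm]
    exact mul_le_mul_of_nonneg_left (hbW k) k.cast_nonneg
  have hW_grad (k : ℕ) : c * Λ * ‖G (x (k + 1)) - G (x k)‖ ^ 2 ≤ W k := by
    rw [norm_sub_rev]
    exact le_add_of_nonneg_left (by positivity)
  constructor
  · refine squeeze (2 / c) (fun k => sq_nonneg _) fun k => ?_
    have hq : q k - q (k + 1) = -U (G (x (k + 1))) := by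
      rw [h.dual]
      abel
    have hW_dual : c / 2 * ‖U (G (x (k + 1)))‖ ^ 2 ≤ W k := by
      rw [← norm_neg, ← hq]
      exact le_add_of_nonneg_right (by positivity)
    rw [div_mul_eq_mul_div, le_div_iff₀ hc]
    linarith
  · refine squeeze (c * Λ) (fun k => sq_nonneg _) fun k => ?_
    rw [sub_eq_zero.1 (h.primal k)]
    calc ‖c • Ut (U (G (x (k + 1)) - G (x k)))‖ ^ 2
        = c ^ 2 * ‖Ut (U (G (x (k + 1)) - G (x k)))‖ ^ 2 := by
          rw [norm_smul, mul_pow, Real.norm_eq_abs, sq_abs]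
      _ ≤ c ^ 2 * (Λ * (Λ * ‖G (x (k + 1)) - G (x k)‖ ^ 2)) := by
          gcongr
          exact (norm_sq_le_of_adjoint hΛ hadj hU _).trans (by gcongr; exact hU _)
      _ = c * Λ * (c * Λ * ‖G (x (k + 1)) - G (x k)‖ ^ 2) := by ring
      _ ≤ c * Λ * W k := by gcongr; exact hW_grad k

end IsMirrorExtraTrajectory

end Energy

section

open RealInnerProductSpace

theorem enormSq_eq_norm_sq {p : ℕ} (u : Fin p → ℝ) : enormSq u = ‖WithLp.toLp 2 u‖ ^ 2 := by
  simp [enormSq, EuclideanSpace.norm_sq_eq]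

theorem cocoercive_of_convexOn_of_enormSq_le {p : ℕ} {f : (Fin p → ℝ) → ℝ}
    {g : (Fin p → ℝ) → Fin p → ℝ} {Lf L : ℝ}
    (hgrad : ∀ u : Fin p → ℝ,
      HasGradientAt (fun v : EuclideanSpace ℝ (Fin p) => f ((WithLp.equiv 2 (Fin p → ℝ)) v))
        ((WithLp.equiv 2 (Fin p → ℝ)).symm (g u)) ((WithLp.equiv 2 (Fin p → ℝ)).symm u))
    (hconv : ConvexOn ℝ Set.univ f) (hLf : 0 < Lf)
    (hlip : ∀ u v, enormSq (g u - g v) ≤ Lf ^ 2 * enormSq (u - v)) (hLfL : Lf ≤ L)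
    (u v : Fin p → ℝ) :
    L⁻¹ * ‖WithLp.toLp 2 (g u) - WithLp.toLp 2 (g v)‖ ^ 2
      ≤ ⟪WithLp.toLp 2 (g u) - WithLp.toLp 2 (g v), WithLp.toLp 2 u - WithLp.toLp 2 v⟫ := by
  set G : EuclideanSpace ℝ (Fin p) → EuclideanSpace ℝ (Fin p) :=
    fun w => WithLp.toLp 2 (g (WithLp.ofLp w))
  have hf : ∀ w, HasGradientAt (fun w : EuclideanSpace ℝ (Fin p) => f (WithLp.ofLp w)) (G w) w :=
    fun w => by simpa using hgrad (WithLp.ofLp w)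
  have hconv' : ConvexOn ℝ Set.univ fun w : EuclideanSpace ℝ (Fin p) => f (WithLp.ofLp w) :=
    hconv.comp_linearMap (WithLp.linearEquiv 2 ℝ (Fin p → ℝ)).toLinearMap
  have hG : ∀ a b, ‖G a - G b‖ ≤ Lf * ‖a - b‖ := by
    intro a b
    rw [← pow_le_pow_iff_left₀ (norm_nonneg _) (by positivity) two_ne_zero, mul_pow]
    simpa [enormSq_eq_norm_sq, G] using hlip (WithLp.ofLp a) (WithLp.ofLp b)
  calc L⁻¹ * ‖WithLp.toLp 2 (g u) - WithLp.toLp 2 (g v)‖ ^ 2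
      ≤ Lf⁻¹ * ‖WithLp.toLp 2 (g u) - WithLp.toLp 2 (g v)‖ ^ 2 := by
        gcongr
    _ ≤ _ := hconv'.cocoercive_of_lipschitz_gradient hLf hf hG _ _

end

namespace Matrix

open RealInnerProductSpace

variable {m n : Type*} [Fintype m] [Fintype n]

attribute [local instance] frobeniusNormedAddCommGroup frobeniusNormedSpace

theorem frobenius_norm_sq (A : Matrix m n ℝ) : ‖A‖ ^ 2 = ∑ i, ∑ j, A i j ^ 2 := by
  change ‖WithLp.toLp 2 fun i => WithLp.toLp 2 fun j => A i j‖ ^ 2 = _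
  simp [PiLp.norm_sq_eq_of_L2]

theorem trace_transpose_mul_self (A : Matrix m n ℝ) : (Aᵀ * A).trace = ∑ i, ∑ j, A i j ^ 2 := by
  simp only [trace, diag, mul_apply, transpose_apply, sq]
  exact Finset.sum_comm

@[reducible]
def frobeniusInnerProductSpace : InnerProductSpace ℝ (Matrix m n ℝ) where
  __ := frobeniusNormedSpace
  inner A B := (Aᵀ * B).trace
  norm_sq_eq_re_inner A := by simp [frobenius_norm_sq, trace_transpose_mul_self]
  conj_inner_symm A B := by
    simp only [conj_trivial]
    rw [← trace_transpose, transpose_mul, transpose_transpose]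
  add_left A B C := by simp [transpose_add, Matrix.add_mul, trace_add]
  smul_left A B r := by simp [transpose_smul, smul_mul, trace_smul]

attribute [local instance] frobeniusInnerProductSpace

theorem frobenius_inner_def (A B : Matrix m n ℝ) : ⟪A, B⟫ = (Aᵀ * B).trace := rfl

theorem frobenius_inner_mul_left {l : Type*} [Fintype l] (M : Matrix l m ℝ) (A : Matrix m n ℝ)
    (B : Matrix l n ℝ) : ⟪M * A, B⟫ = ⟪A, Mᵀ * B⟫ := by
  simp only [frobenius_inner_def, transpose_mul, Matrix.mul_assoc]

theorem frobenius_inner_eq_sum_rows (A B : Matrix m n ℝ) :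
    ⟪A, B⟫ = ∑ i, ⟪WithLp.toLp 2 (A i), WithLp.toLp 2 (B i)⟫ := by
  simp only [frobenius_inner_def, trace, diag, mul_apply, transpose_apply, PiLp.inner_apply,
    RCLike.inner_apply, conj_trivial]
  rw [Finset.sum_comm]
  simp only [mul_comm]

theorem posSemidef_smul_one_sub_of_eigenvalue_le [DecidableEq m] {A : Matrix m m ℝ}
    (hA : A.IsHermitian) {μ : ℝ}
    (h : ∀ (ν : ℝ) (v : m → ℝ), v ≠ 0 → A *ᵥ v = ν • v → ν ≤ μ) : (μ • 1 - A).PosSemidef := by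
  rw [posSemidef_iff_isHermitian_and_spectrum_nonneg]
  refine ⟨(isHermitian_one.smul (IsSelfAdjoint.all μ)).sub hA, ?_⟩
  rw [← Algebra.algebraMap_eq_smul_one, ← spectrum.singleton_sub_eq,
    hA.spectrum_real_eq_range_eigenvalues]
  rintro _ ⟨_, rfl, _, ⟨i, rfl⟩, rfl⟩
  have hv : (WithLp.ofLp (hA.eigenvectorBasis i)) ≠ 0 := by
    simpa using hA.eigenvectorBasis.orthonormal.ne_zero i
  simpa using h _ _ hv (hA.mulVec_eigenvectorBasis i)

theorem frobenius_norm_mul_sq_le {l : Type*} [Fintype l] [DecidableEq m] {U : Matrix l m ℝ}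
    {μ : ℝ} (h : (μ • 1 - Uᵀ * U).PosSemidef) (A : Matrix m n ℝ) : ‖U * A‖ ^ 2 ≤ μ * ‖A‖ ^ 2 := by
  have := (h.conjTranspose_mul_mul_same A).trace_nonneg
  rw [← real_inner_self_eq_norm_sq, ← real_inner_self_eq_norm_sq, frobenius_inner_def,
    frobenius_inner_def]
  simp only [conjTranspose_eq_transpose_of_trivial, Matrix.mul_sub, Matrix.sub_mul, trace_sub,
    Matrix.mul_smul, Matrix.smul_mul, Matrix.mul_one, trace_smul, transpose_mul,
    Matrix.mul_assoc] at this ⊢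
  simpa using this

end Matrix

section Frobenius

open RealInnerProductSpace

attribute [local instance] Matrix.frobeniusNormedAddCommGroup Matrix.frobeniusInnerProductSpace

theorem frobSq_eq_norm_sq {m n : ℕ} (A : Matrix (Fin m) (Fin n) ℝ) : frobSq A = ‖A‖ ^ 2 :=
  (Matrix.frobenius_norm_sq A).symm

theorem gradMat_cocoercive {n p : ℕ} {g : Fin n → (Fin p → ℝ) → Fin p → ℝ} {L : ℝ}
    (hrow : ∀ i u v, L⁻¹ * ‖WithLp.toLp 2 (g i u) - WithLp.toLp 2 (g i v)‖ ^ 2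
      ≤ ⟪WithLp.toLp 2 (g i u) - WithLp.toLp 2 (g i v), WithLp.toLp 2 u - WithLp.toLp 2 v⟫)
    (X Y : Matrix (Fin n) (Fin p) ℝ) :
    L⁻¹ * ‖gradMat g X - gradMat g Y‖ ^ 2 ≤ ⟪gradMat g X - gradMat g Y, X - Y⟫ := by
  rw [← real_inner_self_eq_norm_sq, frobenius_inner_eq_sum_rows, frobenius_inner_eq_sum_rows,
    Finset.mul_sum]
  gcongr with i
  have hG : (gradMat g X - gradMat g Y) i = g i (X i) - g i (Y i) := rfl
  have hXY : (X - Y) i = X i - Y i := rfl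
  rw [hG, hXY, WithLp.toLp_sub, WithLp.toLp_sub, real_inner_self_eq_norm_sq]
  exact hrow i (X i) (Y i)

end Frobenius

theorem stmt_16_general (n p : ℕ)
    (U : Matrix (Fin (n - 1)) (Fin n) ℝ)
    (r : Matrix (Fin n) (Fin p) ℝ)
    (f : Fin n → (Fin p → ℝ) → ℝ)
    (g : Fin n → (Fin p → ℝ) → (Fin p → ℝ))
    -- each `fᵢ` is differentiable with gradient `g i`
    (hgrad : ∀ i (u : Fin p → ℝ),
      HasGradientAt (fun v : EuclideanSpace ℝ (Fin p) => f i ((WithLp.equiv 2 (Fin p → ℝ)) v))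
        ((WithLp.equiv 2 (Fin p → ℝ)).symm (g i u))
        ((WithLp.equiv 2 (Fin p → ℝ)).symm u))
    -- each `fᵢ` is convex
    (hconv : ∀ i, ConvexOn ℝ Set.univ (f i))
    (Li : Fin n → ℝ) (hLpos : ∀ i, 0 < Li i)
    -- each `∇fᵢ` is `Lᵢ`-Lipschitz
    (hlip : ∀ i (u v : Fin p → ℝ), enormSq (g i u - g i v) ≤ (Li i) ^ 2 * enormSq (u - v))
    -- `L = maxᵢ Lᵢ`
    (L : ℝ) (hL : IsGreatest (Set.range Li) L)
    -- `λ_max(𝕃)`: the largest eigenvalue of `𝕃 = UᵀU`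
    (lmax : ℝ)
    (hlmax_max : ∀ (ν : ℝ) (v : Fin n → ℝ), v ≠ 0 → (Uᵀ * U).mulVec v = ν • v → ν ≤ lmax)
    (c : ℝ) (hc0 : 0 < c) (hc1 : c < 1 / (2 * L * lmax))
    -- an optimal pair `(x*, q*)` exists
    (hopt : ∃ (xs : Matrix (Fin n) (Fin p) ℝ) (qs : Matrix (Fin (n - 1)) (Fin p) ℝ),
      xs - r + c • (Uᵀ * qs) = 0 ∧ U * gradMat g xs = 0)
    -- a Mirror-EXTRA trajectory
    (x : ℕ → Matrix (Fin n) (Fin p) ℝ) (q : ℕ → Matrix (Fin (n - 1)) (Fin p) ℝ)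
    (hrec1 : ∀ k : ℕ,
      x (k + 1) - r + c • (Uᵀ * q (k + 1))
        - c • ((Uᵀ * U) * (gradMat g (x (k + 1)) - gradMat g (x k))) = 0)
    (hrec2 : ∀ k : ℕ, q (k + 1) = q k + U * gradMat g (x (k + 1))) :
    Tendsto (fun k : ℕ => (k : ℝ) * frobSq (U * gradMat g (x (k + 1)))) atTop (𝓝 0) ∧
    Tendsto (fun k : ℕ =>
      (k : ℝ) * frobSq (x (k + 1) - r + c • (Uᵀ * q (k + 1)))) atTop (𝓝 0) := by
  let _ : NormedAddCommGroup (Matrix (Fin n) (Fin p) ℝ) := Matrix.frobeniusNormedAddCommGroup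
  let _ : NormedAddCommGroup (Matrix (Fin (n - 1)) (Fin p) ℝ) :=
    Matrix.frobeniusNormedAddCommGroup
  let _ : InnerProductSpace ℝ (Matrix (Fin n) (Fin p) ℝ) := Matrix.frobeniusInnerProductSpace
  let _ : InnerProductSpace ℝ (Matrix (Fin (n - 1)) (Fin p) ℝ) :=
    Matrix.frobeniusInnerProductSpace
  obtain ⟨⟨i₀, rfl⟩, hLi⟩ := hL
  have h2LΛ : 0 < 2 * Li i₀ * lmax := one_div_pos.1 (hc0.trans hc1)
  have hΛ : 0 < lmax := pos_of_mul_pos_right h2LΛ (by linarith [hLpos i₀])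
  have hcΛ : 2 * c * lmax < (Li i₀)⁻¹ := by
    have := (lt_div_iff₀ h2LΛ).1 hc1
    rw [← one_div, lt_div_iff₀ (hLpos i₀)]
    linarith
  have htraj : IsMirrorExtraTrajectory (mulLeftLinearMap (Fin p) ℝ U)
      (mulLeftLinearMap (Fin p) ℝ Uᵀ) (gradMat g) r c x q :=
    { primal := fun k => by simpa [Matrix.mul_assoc] using hrec1 k
      dual := hrec2 }
  have hcoco := gradMat_cocoercive fun i => cocoercive_of_convexOn_of_enormSq_le (hgrad i)
    (hconv i) (hLpos i) (hlip i) (hLi ⟨i, rfl⟩)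
  have hPSD := Matrix.posSemidef_smul_one_sub_of_eigenvalue_le
    (by simpa using isHermitian_conjTranspose_mul_self U) hlmax_max
  simpa only [frobSq_eq_norm_sq, mulLeftLinearMap_apply] using
    htraj.tendsto_nat_mul_residual hopt hc0 hΛ.le (Matrix.frobenius_inner_mul_left U)
      (Matrix.frobenius_norm_mul_sq_le hPSD) hcoco hcΛ

/-- `o(1/k)` decay of the first-order optimality residuals of Mirror-EXTRA
(Theorem 5). -/
theorem stmt_16 (n p : ℕ) (hn : 2 ≤ n) (hp : 1 ≤ p)
    (U : Matrix (Fin (n - 1)) (Fin n) ℝ)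
    (hU : ∀ v : Fin n → ℝ, U.mulVec v = 0 ↔ ∃ a : ℝ, v = fun _ => a)
    (r : Matrix (Fin n) (Fin p) ℝ)
    (f : Fin n → (Fin p → ℝ) → ℝ)
    (g : Fin n → (Fin p → ℝ) → (Fin p → ℝ))
    -- each `fᵢ` is differentiable with gradient `g i`
    (hgrad : ∀ i (u : Fin p → ℝ),
      HasGradientAt (fun v : EuclideanSpace ℝ (Fin p) => f i ((WithLp.equiv 2 (Fin p → ℝ)) v))
        ((WithLp.equiv 2 (Fin p → ℝ)).symm (g i u))
        ((WithLp.equiv 2 (Fin p → ℝ)).symm u))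
    -- each `fᵢ` is convex
    (hconv : ∀ i, ConvexOn ℝ Set.univ (f i))
    (Li : Fin n → ℝ) (hLpos : ∀ i, 0 < Li i)
    -- each `∇fᵢ` is `Lᵢ`-Lipschitz
    (hlip : ∀ i (u v : Fin p → ℝ), enormSq (g i u - g i v) ≤ (Li i) ^ 2 * enormSq (u - v))
    -- `L = maxᵢ Lᵢ`
    (L : ℝ) (hL : IsGreatest (Set.range Li) L)
    -- `λ_max(𝕃)`: the largest eigenvalue of `𝕃 = UᵀU`
    (lmax : ℝ)
    (hlmax_eig : ∃ v : Fin n → ℝ, v ≠ 0 ∧ (Uᵀ * U).mulVec v = lmax • v)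
    (hlmax_max : ∀ (ν : ℝ) (v : Fin n → ℝ), v ≠ 0 → (Uᵀ * U).mulVec v = ν • v → ν ≤ lmax)
    (c : ℝ) (hc0 : 0 < c) (hc1 : c < 1 / (2 * L * lmax))
    -- an optimal pair `(x*, q*)` exists
    (hopt : ∃ (xs : Matrix (Fin n) (Fin p) ℝ) (qs : Matrix (Fin (n - 1)) (Fin p) ℝ),
      xs - r + c • (Uᵀ * qs) = 0 ∧ U * gradMat g xs = 0)
    -- a Mirror-EXTRA trajectory
    (x : ℕ → Matrix (Fin n) (Fin p) ℝ) (q : ℕ → Matrix (Fin (n - 1)) (Fin p) ℝ)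
    (hrec1 : ∀ k : ℕ,
      x (k + 1) - r + c • (Uᵀ * q (k + 1))
        - c • ((Uᵀ * U) * (gradMat g (x (k + 1)) - gradMat g (x k))) = 0)
    (hrec2 : ∀ k : ℕ, q (k + 1) = q k + U * gradMat g (x (k + 1))) :
    Tendsto (fun k : ℕ => (k : ℝ) * frobSq (U * gradMat g (x (k + 1)))) atTop (𝓝 0) ∧
    Tendsto (fun k : ℕ =>
      (k : ℝ) * frobSq (x (k + 1) - r + c • (Uᵀ * q (k + 1)))) atTop (𝓝 0) :=
  stmt_16_general n p U r f g hgrad hconv Li hLpos hlip L hL lmax hlmax_max c hc0 hc1 hopt x q hrec1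
    hrec2
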